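/- arXiv:1807.11687 — 2 statements merged into one kernel-verified Lean document; each statement's English description precedes it below -/
import Mathlib

section
/- For s ≤ t in (0,1), define r₁(s,t) = (s(1-t))/(t(1-s)). Then for each fixed t ∈ (0,1), the limit as s → 0 of (1 - r₁(t, t+s))/|s| equals 1/(t(1-t)); more precisely, for any 0 < T₁ < T₂ < 1, lim_{ε→0} sup_{t, t+s ∈ [T₁,T₂], 0<|s|<ε} |(1 - r₁(t,t+s))/|s| − 1/(t(1-t))| = 0. -/
/-!
For `s < t` in `(0, 1)` one has `1 - r1 s t = (t - s) / (t * (1 - s))` exactly, so the difference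
quotient `(1 - r1 t (t + s)) / |s|` is the value of `g (x, y) = 1 / (x * (1 - y))` at the point
`(max t (t + s), min t (t + s))`, which lies within `|s|` of `(t, t)`. The uniform convergence is
then the uniform continuity of `g` on the compact square `[T₁, T₂]²`.
-/

noncomputable def r1 (s t : ℝ) : ℝ :=
  (min s t * (1 - max s t)) / (max s t * (1 - min s t))

open Set

theorem r1_comm (s t : ℝ) : r1 s t = r1 t s := by
  rw [r1, r1, min_comm, max_comm]

theorem one_sub_r1_div_sub {s t : ℝ} (hst : s < t) (ht : t ≠ 0) (hs : s ≠ 1) :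
    (1 - r1 s t) / (t - s) = 1 / (t * (1 - s)) := by
  have hts : t - s ≠ 0 := sub_ne_zero.2 hst.ne'
  have hs' : 1 - s ≠ 0 := sub_ne_zero.2 hs.symm
  rw [r1, min_eq_left hst.le, max_eq_right hst.le]
  field_simp
  ring

theorem one_sub_r1_div_abs_sub {a b : ℝ} (ha : a ∈ Ioo 0 1) (hb : b ∈ Ioo 0 1) (hab : a ≠ b) :
    (1 - r1 a b) / |b - a| = 1 / (max a b * (1 - min a b)) := by
  rcases hab.lt_or_gt with h | h
  · rw [abs_of_pos (sub_pos.2 h), max_eq_right h.le, min_eq_left h.le]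
    exact one_sub_r1_div_sub h hb.1.ne' ha.2.ne
  · rw [abs_sub_comm, abs_of_pos (sub_pos.2 h), max_eq_left h.le, min_eq_right h.le, r1_comm]
    exact one_sub_r1_div_sub h ha.1.ne' hb.2.ne

theorem dist_max_min_le (a b : ℝ) : dist (max a b, min a b) (a, a) ≤ |b - a| := by
  rw [Prod.dist_eq, Real.dist_eq, Real.dist_eq]
  rcases le_total a b with h | h
  · simp [max_eq_right h, min_eq_left h]
  · simp [max_eq_left h, min_eq_right h, abs_sub_comm]

theorem stmt_0_general (T₁ T₂ : ℝ) (h1 : 0 < T₁) (h2 : T₂ < 1) :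
    ∀ δ > (0 : ℝ), ∃ ε > (0 : ℝ), ∀ t s : ℝ,
      t ∈ Set.Icc T₁ T₂ → t + s ∈ Set.Icc T₁ T₂ → 0 < |s| → |s| < ε →
      |(1 - r1 t (t + s)) / |s| - 1 / (t * (1 - t))| < δ := by
  intro δ hδ
  set K := Icc T₁ T₂ ×ˢ Icc T₁ T₂
  have hcont : ContinuousOn (fun p : ℝ × ℝ => 1 / (p.1 * (1 - p.2))) K := by
    refine ContinuousOn.div continuousOn_const (by fun_prop) ?_
    rintro ⟨x, y⟩ ⟨hx, hy⟩
    exact mul_ne_zero (by linarith [hx.1]) (by linarith [hy.2])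
  obtain ⟨ε, hε, hunif⟩ := Metric.uniformContinuousOn_iff.1
    ((isCompact_Icc.prod isCompact_Icc).uniformContinuousOn_of_continuous hcont) δ hδ
  refine ⟨ε, hε, fun t s ht hts hs hsε => ?_⟩
  have hIoo : ∀ x ∈ Icc T₁ T₂, x ∈ Ioo (0 : ℝ) 1 := fun x hx => ⟨h1.trans_le hx.1, hx.2.trans_lt h2⟩
  have key := one_sub_r1_div_abs_sub (hIoo t ht) (hIoo _ hts) (by simpa [abs_pos] using hs)
  simp only [add_sub_cancel_left] at key
  rw [key, ← Real.dist_eq]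
  refine hunif (max t (t + s), min t (t + s)) ⟨?_, ?_⟩ (t, t) ⟨ht, ht⟩ ?_
  · exact ⟨le_max_of_le_left ht.1, max_le ht.2 hts.2⟩
  · exact ⟨le_min ht.1 hts.1, min_le_of_left_le ht.2⟩
  · exact (dist_max_min_le t (t + s)).trans_lt (by rwa [add_sub_cancel_left])

theorem stmt_0 (T₁ T₂ : ℝ) (h1 : 0 < T₁) (h12 : T₁ < T₂) (h2 : T₂ < 1) :
    ∀ δ > (0 : ℝ), ∃ ε > (0 : ℝ), ∀ t s : ℝ,
      t ∈ Set.Icc T₁ T₂ → t + s ∈ Set.Icc T₁ T₂ → 0 < |s| → |s| < ε →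
      |(1 - r1 t (t + s)) / |s| - 1 / (t * (1 - t))| < δ :=
  stmt_0_general T₁ T₂ h1 h2
end

section
/- For s ≤ t in (0,1), define r₂(s,t) = (s(1-t))/√(s(1-s)t(1-t)). Then for any 0 < T₁ < T₂ < 1, lim_{ε→0} sup_{t, t+s ∈ [T₁,T₂], 0<|s|<ε} |(1 - r₂(t,t+s))/|s| − 1/(2t(1-t))| = 0. -/
/-!
For `u < v` in `(0, 1)` put `a = u(1 - v)` and `b = v(1 - u)`. Then `r₂(u, v) = √a / √b` and
`b - a = v - u`, so `(1 - r₂(u, v)) / (v - u) = 1 / (√b (√a + √b))`. This closed form is continuous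
up to the diagonal `u = v`, where it equals `1 / (2t(1 - t))`, and uniform continuity on the compact
square `[T₁, T₂]²` turns pointwise convergence into the uniform one.
-/

noncomputable def r2 (s t : ℝ) : ℝ :=
  (min s t * (1 - max s t)) /
    Real.sqrt (min s t * (1 - min s t) * (max s t) * (1 - max s t))

open Set

theorem r2_comm (u v : ℝ) : r2 u v = r2 v u := by
  simp only [r2, min_comm, max_comm]

theorem r2_eq_sqrt_div_sqrt {u v : ℝ} (hu : 0 < u) (huv : u ≤ v) (hv : v < 1) :
    r2 u v = √(u * (1 - v)) / √(v * (1 - u)) := by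
  have ha : 0 < u * (1 - v) := mul_pos hu (by linarith)
  rw [r2, min_eq_left huv, max_eq_right huv,
    show u * (1 - u) * v * (1 - v) = u * (1 - v) * (v * (1 - u)) by ring, Real.sqrt_mul ha.le]
  nth_rewrite 1 [← Real.mul_self_sqrt ha.le]
  rw [mul_div_mul_left _ _ (Real.sqrt_pos.2 ha).ne']

theorem one_sub_r2_div_sub {u v : ℝ} (hu : 0 < u) (huv : u < v) (hv : v < 1) :
    (1 - r2 u v) / (v - u) = 1 / (√(v * (1 - u)) * (√(u * (1 - v)) + √(v * (1 - u)))) := by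
  have ha : 0 < u * (1 - v) := mul_pos hu (by linarith)
  have hb : 0 < v * (1 - u) := mul_pos (hu.trans huv) (by linarith)
  have hab : √(u * (1 - v)) < √(v * (1 - u)) := Real.sqrt_lt_sqrt ha.le (by nlinarith)
  have hba : v - u = √(v * (1 - u)) ^ 2 - √(u * (1 - v)) ^ 2 := by
    rw [Real.sq_sqrt hb.le, Real.sq_sqrt ha.le]; ring
  rw [r2_eq_sqrt_div_sqrt hu huv.le hv, hba, sq_sub_sq, add_comm (√(v * (1 - u)))]
  have : √(v * (1 - u)) - √(u * (1 - v)) ≠ 0 := (sub_pos.2 hab).ne'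
  field_simp

noncomputable def r2Slope (u v : ℝ) : ℝ :=
  1 / (√(max u v * (1 - min u v)) *
    (√(min u v * (1 - max u v)) + √(max u v * (1 - min u v))))

theorem one_sub_r2_div_abs_sub {u v : ℝ} (hu₀ : 0 < u) (hu₁ : u < 1) (hv₀ : 0 < v) (hv₁ : v < 1)
    (huv : u ≠ v) : (1 - r2 u v) / |v - u| = r2Slope u v := by
  rcases huv.lt_or_gt with h | h
  · rw [abs_of_pos (sub_pos.2 h), one_sub_r2_div_sub hu₀ h hv₁, r2Slope, min_eq_left h.le,
      max_eq_right h.le]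
  · rw [r2_comm, abs_sub_comm, abs_of_pos (sub_pos.2 h), one_sub_r2_div_sub hv₀ h hu₁, r2Slope,
      min_eq_right h.le, max_eq_left h.le]

theorem r2Slope_self {t : ℝ} (ht₀ : 0 < t) (ht₁ : t < 1) :
    r2Slope t t = 1 / (2 * t * (1 - t)) := by
  have hc : 0 ≤ t * (1 - t) := mul_nonneg ht₀.le (by linarith)
  rw [r2Slope, min_self, max_self, ← two_mul, mul_left_comm, Real.mul_self_sqrt hc, mul_assoc]

theorem continuousOn_r2Slope :
    ContinuousOn (Function.uncurry r2Slope) (Ioo 0 1 ×ˢ Ioo 0 1) := by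
  refine continuousOn_const.div (by fun_prop) fun x ⟨⟨hu₀, hu₁⟩, _⟩ => ?_
  have hb : 0 < max x.1 x.2 * (1 - min x.1 x.2) :=
    mul_pos (lt_max_of_lt_left hu₀) (by linarith [min_le_left x.1 x.2])
  have := Real.sqrt_pos.2 hb
  positivity

theorem exists_pos_forall_abs_sub_diag_lt {f : ℝ × ℝ → ℝ} {a b : ℝ}
    (hf : ContinuousOn f (Icc a b ×ˢ Icc a b)) {δ : ℝ} (hδ : 0 < δ) :
    ∃ ε > 0, ∀ t s : ℝ, t ∈ Icc a b → t + s ∈ Icc a b → |s| < ε →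
      |f (t, t + s) - f (t, t)| < δ := by
  obtain ⟨ε, hε, hf_unif⟩ := Metric.uniformContinuousOn_iff.1
    ((isCompact_Icc.prod isCompact_Icc).uniformContinuousOn_of_continuous hf) δ hδ
  refine ⟨ε, hε, fun t s ht hts hs => ?_⟩
  have hdist : dist (t, t + s) (t, t) < ε := by
    simpa [Prod.dist_eq, Real.dist_eq] using hs
  simpa [Real.dist_eq] using hf_unif _ ⟨ht, hts⟩ _ ⟨ht, ht⟩ hdist

theorem stmt_1_general (T₁ T₂ : ℝ) (h1 : 0 < T₁) (h2 : T₂ < 1) :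
    ∀ δ > (0 : ℝ), ∃ ε > (0 : ℝ), ∀ t s : ℝ,
      t ∈ Set.Icc T₁ T₂ → t + s ∈ Set.Icc T₁ T₂ → 0 < |s| → |s| < ε →
      |(1 - r2 t (t + s)) / |s| - 1 / (2 * t * (1 - t))| < δ := by
  intro δ hδ
  have hsub : Icc T₁ T₂ ⊆ Ioo 0 1 := Icc_subset_Ioo h1 h2
  obtain ⟨ε, hε, hclose⟩ := exists_pos_forall_abs_sub_diag_lt
    (continuousOn_r2Slope.mono (prod_mono hsub hsub)) hδ
  refine ⟨ε, hε, fun t s ht hts hs hsε => ?_⟩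
  obtain ⟨ht₀, ht₁⟩ := hsub ht
  obtain ⟨hts₀, hts₁⟩ := hsub hts
  have hne : t ≠ t + s := by simpa [eq_comm] using abs_pos.1 hs
  rw [show |s| = |t + s - t| by rw [add_sub_cancel_left],
    one_sub_r2_div_abs_sub ht₀ ht₁ hts₀ hts₁ hne, ← r2Slope_self ht₀ ht₁]
  exact hclose t s ht hts hsε

theorem stmt_1 (T₁ T₂ : ℝ) (h1 : 0 < T₁) (h12 : T₁ < T₂) (h2 : T₂ < 1) :
    ∀ δ > (0 : ℝ), ∃ ε > (0 : ℝ), ∀ t s : ℝ,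
      t ∈ Set.Icc T₁ T₂ → t + s ∈ Set.Icc T₁ T₂ → 0 < |s| → |s| < ε →
      |(1 - r2 t (t + s)) / |s| - 1 / (2 * t * (1 - t))| < δ :=
  stmt_1_general T₁ T₂ h1 h2
end
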